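/- arXiv:0708.2228 — 5 statements merged into one kernel-verified Lean document; each statement's English description precedes it below -/
import Mathlib

section
/- (Pieri rule in two variables) For all integers i ≥ j ≥ 0 and a ≥ b ≥ 0, the product of two-variable Schur polynomials satisfies π_{i,j}(x,y)·π_{a,b}(x,y) = Σ_{u = max(a+j, b+i)}^{a+i} π_{u, i+j+a+b−u}(x,y) in ℚ[x,y]; note that every index pair (u, i+j+a+b−u) occurring in the sum satisfies u ≥ i+j+a+b−u ≥ 0. -/
open MvPolynomial

/-- The two-variable Schur polynomial `π_{i,j}(x,y) = Σ_{ℓ=j}^{i} x^ℓ y^{i+j−ℓ}` in `ℚ[x,y]`,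
for integers `i ≥ j ≥ 0`. -/
noncomputable def schur2 (i j : ℕ) : MvPolynomial (Fin 2) ℚ :=
  ∑ ℓ ∈ Finset.Icc j i, X 0 ^ ℓ * X 1 ^ (i + j - ℓ)

/-- Telescoping sum over `Icc`. -/
lemma schur2_tel {β : Type*} [AddCommGroup β] (f : ℕ → β) {j i : ℕ} (h : j ≤ i) :
    ∑ ℓ ∈ Finset.Icc j i, (f (ℓ + 1) - f ℓ) = f (i + 1) - f j := by
  induction i, h using Nat.le_induction with
  | base => simp
  | succ n hn ih =>
    rw [Finset.sum_Icc_succ_top (by omega), ih]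
    abel

/-- `(x - y) · π_{i,j} = x^{i+1} y^j - x^j y^{i+1}`. -/
lemma schur2_key (i j : ℕ) (hij : j ≤ i) :
    (X 0 - X 1) * schur2 i j
      = X 0 ^ (i + 1) * X 1 ^ j - X 0 ^ j * X 1 ^ (i + 1) := by
  unfold schur2
  rw [Finset.mul_sum]
  have h1 : ∀ ℓ ∈ Finset.Icc j i,
      (X 0 - X 1 : MvPolynomial (Fin 2) ℚ) * (X 0 ^ ℓ * X 1 ^ (i + j - ℓ))
        = (fun t => X 0 ^ t * X 1 ^ (i + j + 1 - t)) (ℓ + 1)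
          - (fun t => X 0 ^ t * X 1 ^ (i + j + 1 - t)) ℓ := by
    intro ℓ hℓ
    simp only [Finset.mem_Icc] at hℓ
    have e1 : i + j + 1 - (ℓ + 1) = i + j - ℓ := by omega
    have e2 : i + j + 1 - ℓ = (i + j - ℓ) + 1 := by omega
    simp only [e1, e2]
    ring
  rw [Finset.sum_congr rfl h1,
    schur2_tel (fun t => (X 0 : MvPolynomial (Fin 2) ℚ) ^ t * X 1 ^ (i + j + 1 - t)) hij]
  have e3 : i + j + 1 - (i + 1) = j := by omega
  have e4 : i + j + 1 - j = i + 1 := by omega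
  simp only [e3, e4]

/-- The Pieri rule in two variables:
`π_{i,j}·π_{a,b} = Σ_{u = max(a+j, b+i)}^{a+i} π_{u, i+j+a+b−u}`, and every index pair
`(u, i+j+a+b−u)` occurring in the sum satisfies `u ≥ i+j+a+b−u (≥ 0)`. -/
theorem schur2_pieri (i j a b : ℕ) (hij : j ≤ i) (hab : b ≤ a) :
    (schur2 i j * schur2 a b
        = ∑ u ∈ Finset.Icc (max (a + j) (b + i)) (a + i), schur2 u (i + j + a + b - u))
    ∧ ∀ u ∈ Finset.Icc (max (a + j) (b + i)) (a + i), i + j + a + b - u ≤ u := by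
  have hmem : ∀ u ∈ Finset.Icc (max (a + j) (b + i)) (a + i),
      i + j + a + b - u ≤ u := by
    intro u hu
    simp only [Finset.mem_Icc, max_le_iff, le_max_iff] at hu
    omega
  refine ⟨?_, hmem⟩
  set N := i + j + a + b with hN
  set M := max (a + j) (b + i) with hM
  have hX : (X 0 : MvPolynomial (Fin 2) ℚ) ≠ X 1 :=
    fun h => by simpa using MvPolynomial.X_injective h
  have hD : (X 0 - X 1 : MvPolynomial (Fin 2) ℚ) ≠ 0 := sub_ne_zero.mpr hX
  apply mul_left_cancel₀ (pow_ne_zero 2 hD)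
  set g : ℕ → MvPolynomial (Fin 2) ℚ := fun u => X 0 ^ (u + 1) * X 1 ^ (N + 1 - u)
    with hg
  set h : ℕ → MvPolynomial (Fin 2) ℚ := fun u => X 0 ^ (N + 1 - u) * X 1 ^ (u + 1)
    with hh
  have hMT : M ≤ a + i := by
    simp only [hM, max_le_iff]; omega
  have expand : ∀ u ∈ Finset.Icc M (a + i),
      (X 0 - X 1 : MvPolynomial (Fin 2) ℚ) ^ 2 * schur2 u (N - u)
        = (g (u + 1) - g u) + (h (u + 1) - h u) := by
    intro u hu
    simp only [Finset.mem_Icc, hM, max_le_iff] at hu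
    have h1 : N - u ≤ u := by omega
    have hk := schur2_key u (N - u) h1
    have : (X 0 - X 1 : MvPolynomial (Fin 2) ℚ) ^ 2 * schur2 u (N - u)
        = (X 0 - X 1) * ((X 0 - X 1) * schur2 u (N - u)) := by ring
    rw [this, hk]
    simp only [hg, hh]
    have e1 : N + 1 - (u + 1) = N - u := by omega
    have e2 : N + 1 - u = (N - u) + 1 := by omega
    simp only [e1, e2]
    ring
  rw [Finset.mul_sum, Finset.sum_congr rfl expand, Finset.sum_add_distrib,
    schur2_tel g hMT, schur2_tel h hMT]
  have step : (X 0 - X 1 : MvPolynomial (Fin 2) ℚ) ^ 2 * (schur2 i j * schur2 a b)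
      = ((X 0 - X 1) * schur2 i j) * ((X 0 - X 1) * schur2 a b) := by ring
  rw [step, schur2_key i j hij, schur2_key a b hab]
  simp only [hg, hh]
  have e1 : N + 1 - (a + i + 1) = j + b := by omega
  rw [e1]
  rcases le_or_gt (b + i) (a + j) with hc | hc
  · have hM' : M = a + j := max_eq_left hc
    rw [hM']
    have e3 : N + 1 - (a + j) = b + i + 1 := by omega
    rw [e3]
    ring
  · have hM' : M = b + i := max_eq_right hc.le
    rw [hM']
    have e3 : N + 1 - (b + i) = a + j + 1 := by omega
    rw [e3]
    ring
end

section
/- For every integer N ≥ 1, the partial derivative W′₁ = ∂W/∂s of the polynomial W(s,t) ∈ ℚ[s,t] satisfies W′₁(x+y, xy) = (N+1)·π_{N,0}(x,y) in ℚ[x,y]; that is, Σ_{i+2j=N+1} i·a_{i,j}(x+y)^{i−1}(xy)^j = (N+1)·Σ_{ℓ=0}^{N} x^ℓ y^{N−ℓ}. -/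
open MvPolynomial

noncomputable def aW (N : ℕ) : ℕ → ℚ := fun j =>
  if j = 0 then 1
  else ((-1 : ℚ) ^ j / (j : ℚ)) * ((N : ℚ) + 1) * (((N - j).choose (j - 1) : ℕ) : ℚ)

namespace W1aux

noncomputable def A2 : MvPolynomial (Fin 2) ℚ := X 0 + X 1
noncomputable def B2 : MvPolynomial (Fin 2) ℚ := X 0 * X 1

def c (n j : ℕ) : ℚ := (-1 : ℚ)^j * ((n - j).choose j : ℚ)

noncomputable def S (n : ℕ) : MvPolynomial (Fin 2) ℚ :=
  ∑ j ∈ Finset.range (n+1), C (c n j) * A2 ^ (n - 2*j) * B2 ^ j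

noncomputable def h (n : ℕ) : MvPolynomial (Fin 2) ℚ :=
  ∑ ℓ ∈ Finset.range (n+1), X 0 ^ ℓ * X 1 ^ (n - ℓ)

lemma hrec (n : ℕ) : h (n+2) = A2 * h (n+1) - B2 * h n := by
  have h1 : A2 * h (n+1)
      = (∑ ℓ ∈ Finset.range (n+2), X 0 ^ (ℓ+1) * X 1 ^ (n+1-ℓ))
        + ∑ ℓ ∈ Finset.range (n+2), (X 0:MvPolynomial (Fin 2) ℚ) ^ ℓ * X 1 ^ (n+2-ℓ) := by
    rw [h, A2, Finset.mul_sum, ← Finset.sum_add_distrib]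
    refine Finset.sum_congr rfl fun ℓ hℓ => ?_
    have hl : ℓ ≤ n+1 := by
      have := Finset.mem_range.mp hℓ; omega
    have e : n+2-ℓ = (n+1-ℓ)+1 := by omega
    rw [e, pow_succ, pow_succ]
    ring
  have h2 : B2 * h n = ∑ ℓ ∈ Finset.range (n+1), X 0 ^ (ℓ+1) * X 1 ^ (n+1-ℓ) := by
    rw [h, B2, Finset.mul_sum]
    refine Finset.sum_congr rfl fun ℓ hℓ => ?_
    have hl : ℓ ≤ n := by
      have := Finset.mem_range.mp hℓ; omega
    have e : n+1-ℓ = (n-ℓ)+1 := by omega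
    rw [e, pow_succ, pow_succ]
    ring
  have h3 : (∑ ℓ ∈ Finset.range (n+2), X 0 ^ (ℓ+1) * X 1 ^ (n+1-ℓ) : MvPolynomial (Fin 2) ℚ)
      = (∑ ℓ ∈ Finset.range (n+1), X 0 ^ (ℓ+1) * X 1 ^ (n+1-ℓ)) + X 0 ^ (n+2) := by
    rw [Finset.sum_range_succ]; simp
  have h4 : h (n+2) = (∑ ℓ ∈ Finset.range (n+2), (X 0:MvPolynomial (Fin 2) ℚ) ^ ℓ * X 1 ^ (n+2-ℓ))
      + X 0 ^ (n+2) := by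
    rw [h, Finset.sum_range_succ]; simp
  rw [h1, h2, h3, h4]; ring

lemma Srec (n : ℕ) : S (n+2) = A2 * S (n+1) - B2 * S n := by
  have h1 : A2 * S (n+1)
      = ∑ j ∈ Finset.range (n+3), C (c (n+1) j) * A2 ^ (n+2-2*j) * B2 ^ j := by
    rw [S, Finset.mul_sum]
    rw [Finset.sum_range_succ (f := fun j => C (c (n+1) j) * A2 ^ (n+2-2*j) * B2 ^ j)]
    have hz : c (n+1) (n+2) = 0 := by
      have : (n+1-(n+2)).choose (n+2) = 0 := Nat.choose_eq_zero_of_lt (by omega)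
      simp [c, this]
    rw [hz, map_zero, zero_mul, zero_mul, add_zero]
    refine Finset.sum_congr rfl fun j hj => ?_
    by_cases h2j : 2*j ≤ n+1
    · have e : n+2-2*j = (n+1-2*j)+1 := by omega
      rw [e, pow_succ]; ring
    · have hj' : j ≤ n+1 := by
        have := Finset.mem_range.mp hj; omega
      have : c (n+1) j = 0 := by
        have : (n+1-j).choose j = 0 := Nat.choose_eq_zero_of_lt (by omega)
        simp [c, this]
      simp [this]
  have h2 : B2 * S n
      = ∑ j ∈ Finset.range (n+3),
          C (if j = 0 then (0:ℚ) else c n (j-1)) * A2 ^ (n+2-2*j) * B2 ^ j := by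
    have hz : c n (n+1) = 0 := by
      have : (n-(n+1)).choose (n+1) = 0 := Nat.choose_eq_zero_of_lt (by omega)
      simp [c, this]
    have e1 := Finset.sum_range_succ' (fun j => C (if j = 0 then (0:ℚ) else c n (j-1)) * A2 ^ (n+2-2*j) * B2 ^ j) (n+2)
    simp only [Nat.succ_ne_zero, if_false, if_true, Nat.add_sub_cancel, map_zero, zero_mul,
      add_zero, ite_false, ite_true, reduceIte] at e1
    rw [Finset.sum_range_succ (f := fun x => C (c n x) * A2 ^ (n+2-2*(x+1)) * B2 ^ (x+1)),
      hz, map_zero, zero_mul, zero_mul, add_zero] at e1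
    rw [S, Finset.mul_sum, e1]
    refine Finset.sum_congr rfl fun i hi => ?_
    have e : n+2-2*(i+1) = n-2*i := by omega
    rw [e, pow_succ]
    ring
  rw [h1, h2, ← Finset.sum_sub_distrib, S]
  refine Finset.sum_congr rfl fun j hj => ?_
  have hc : c (n+2) j = c (n+1) j - (if j = 0 then (0:ℚ) else c n (j-1)) := by
    rcases j with _ | i
    · simp [c]
    · simp only [Nat.succ_ne_zero, if_false, Nat.add_sub_cancel]
      by_cases hi : i ≤ n
      · have e1 : n+2-(i+1) = (n-i)+1 := by omega
        have e2 : n+1-(i+1) = n-i := by omega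
        rw [c, c, c, e1, e2]
        rw [Nat.choose_succ_succ]
        push_cast
        ring
      · have z1 : (n+1-i).choose (i+1) = 0 := Nat.choose_eq_zero_of_lt (by omega)
        have z2 : (n-i).choose (i+1) = 0 := Nat.choose_eq_zero_of_lt (by omega)
        have z3 : (n-i).choose i = 0 := Nat.choose_eq_zero_of_lt (by omega)
        have e1 : n+2-(i+1) = n+1-i := by omega
        have e2 : n+1-(i+1) = n-i := by omega
        simp [c, e1, e2, z1, z2, z3]
  rw [hc, map_sub]
  ring

lemma S_eq_h (n : ℕ) : S n = h n := by
  have key : ∀ m, S m = h m ∧ S (m+1) = h (m+1) := by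
    intro m
    induction m with
    | zero =>
      constructor
      · simp [S, h, c]
      · have hz : c 1 1 = 0 := by simp [c]
        simp [S, h, c, hz, A2, B2, Finset.sum_range_succ]
        ring
    | succ m ih =>
      exact ⟨ih.2, by rw [Srec, hrec, ih.1, ih.2]⟩
  exact (key n).1

end W1aux

/-- For every `N ≥ 1`, the partial derivative `W′₁ = ∂W/∂s` of `W` satisfies
`W′₁(x+y, xy) = (N+1)·π_{N,0}(x,y)`; that is,
`Σ_{i+2j=N+1} i·a_{i,j}(x+y)^{i−1}(xy)^j = (N+1)·Σ_{ℓ=0}^{N} x^ℓ y^{N−ℓ}`. -/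
theorem W1'_eval_add_mul (N : ℕ) (hN : 1 ≤ N) :
    ∑ j ∈ Finset.Iic ((N + 1) / 2),
        C (((N + 1 - 2 * j : ℕ) : ℚ) * aW N j)
          * (X 0 + X 1) ^ (N + 1 - 2 * j - 1) * (X 0 * X 1) ^ j
      = C ((N : ℚ) + 1) *
          ∑ ℓ ∈ Finset.range (N + 1), (X 0 : MvPolynomial (Fin 2) ℚ) ^ ℓ * X 1 ^ (N - ℓ) := by
  open W1aux in
  have step1 : ∀ j ∈ Finset.Iic ((N+1)/2),
      C (((N + 1 - 2 * j : ℕ) : ℚ) * aW N j)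
          * (X 0 + X 1) ^ (N + 1 - 2 * j - 1) * (X 0 * X 1) ^ j
      = C (((N:ℚ)+1) * c N j) * A2 ^ (N - 2*j) * B2 ^ j := by
    intro j hj
    have h2j : 2*j ≤ N+1 := by
      have := Finset.mem_Iic.mp hj; omega
    have he : N + 1 - 2*j - 1 = N - 2*j := by omega
    have hcoef : ((N + 1 - 2 * j : ℕ) : ℚ) * aW N j = ((N:ℚ)+1) * c N j := by
      rcases Nat.eq_zero_or_pos j with hj0 | hj0
      · subst hj0; simp [aW, c]
      · have hj0' : j ≠ 0 := hj0.ne'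
        rw [aW]
        simp only [if_neg hj0']
        rw [c]
        have key : (N-j).choose j * j = (N-j).choose (j-1) * (N+1-2*j) := by
          have hkey := Nat.choose_succ_right_eq (N-j) (j-1)
          have hj1 : j - 1 + 1 = j := by omega
          rw [hj1] at hkey
          rw [hkey]
          congr 1
          omega
        have keyQ : ((N-j).choose j : ℚ) * (j:ℚ)
            = ((N-j).choose (j-1) : ℚ) * ((N+1-2*j : ℕ) : ℚ) := by
          exact_mod_cast congrArg (Nat.cast : ℕ → ℚ) key
        have hjQ : (j:ℚ) ≠ 0 := Nat.cast_ne_zero.mpr hj0'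
        have hCj : (((N-j).choose j : ℕ) : ℚ)
            = ((N-j).choose (j-1) : ℚ) * ((N+1-2*j : ℕ) : ℚ) / (j:ℚ) := by
          rw [eq_div_iff hjQ]; linear_combination keyQ
        rw [hCj]
        field_simp
    rw [hcoef, he, A2, B2]
  rw [Finset.sum_congr rfl step1]
  have hsub : Finset.Iic ((N+1)/2) ⊆ Finset.range (N+1) := by
    intro x hx
    have := Finset.mem_Iic.mp hx
    exact Finset.mem_range.mpr (by omega)
  rw [Finset.sum_subset hsub]
  · rw [show (∑ ℓ ∈ Finset.range (N + 1), (X 0 : MvPolynomial (Fin 2) ℚ) ^ ℓ * X 1 ^ (N - ℓ))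
        = h N from (h.eq_def N).symm, ← S_eq_h, S, Finset.mul_sum]
    refine Finset.sum_congr rfl fun j _ => ?_
    rw [map_mul]
    ring
  · intro x hx hx'
    have hx1 := Finset.mem_range.mp hx
    have hx2 : ¬ x ≤ (N+1)/2 := fun hh => hx' (Finset.mem_Iic.mpr hh)
    have : (N-x).choose x = 0 := Nat.choose_eq_zero_of_lt (by omega)
    simp [c, this]
end

section
/- For every integer N ≥ 1, the partial derivative W′₂ = ∂W/∂t of the polynomial W(s,t) ∈ ℚ[s,t] satisfies W′₂(x+y, xy) = −(N+1)·π_{N−1,0}(x,y) in ℚ[x,y]; that is, Σ_{i+2j=N+1} j·a_{i,j}(x+y)^{i}(xy)^{j−1} = −(N+1)·Σ_{ℓ=0}^{N−1} x^ℓ y^{N−1−ℓ}. -/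
open MvPolynomial

noncomputable def fW (n k : ℕ) : MvPolynomial (Fin 2) ℚ :=
  C ((-1 : ℚ) ^ k * (((n - k).choose k : ℕ) : ℚ)) * (X 0 + X 1) ^ (n - 2 * k) * (X 0 * X 1) ^ k

noncomputable def LW (n : ℕ) : MvPolynomial (Fin 2) ℚ := ∑ k ∈ Finset.range (n + 1), fW n k

noncomputable def RW (n : ℕ) : MvPolynomial (Fin 2) ℚ :=
  ∑ ℓ ∈ Finset.range (n + 1), X 0 ^ ℓ * X 1 ^ (n - ℓ)

lemma fW_zero2 {n k : ℕ} (h : n < 2 * k) : fW n k = 0 := by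
  have : n - k < k := by omega
  simp [fW, Nat.choose_eq_zero_of_lt this]

lemma fW_zero {n k : ℕ} (h : n < k) : fW n k = 0 := by
  have h1 : n - k = 0 := by omega
  have h2 : (0 : ℕ).choose k = 0 := Nat.choose_eq_zero_of_lt (by omega)
  simp [fW, h1, h2]

lemma choose_pascal (n k : ℕ) :
    (n + 1 - k).choose (k + 1) = (n - k).choose (k + 1) + (n - k).choose k := by
  rcases le_or_gt k n with h | h
  · have : n + 1 - k = (n - k) + 1 := by omega
    rw [this, Nat.choose_succ_succ]
    exact Nat.add_comm _ _
  · have h1 : n - k = 0 := by omega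
    have h2 : n + 1 - k ≤ k := by omega
    rw [h1]
    rw [Nat.choose_eq_zero_of_lt (by omega : n + 1 - k < k + 1)]
    rw [Nat.choose_eq_zero_of_lt (by omega : 0 < k + 1),
        Nat.choose_eq_zero_of_lt (by omega : 0 < k)]

lemma fW_step (n k : ℕ) :
    fW (n + 2) (k + 1) = (X 0 + X 1) * fW (n + 1) (k + 1) - (X 0 * X 1) * fW n k := by
  rcases le_or_gt (2 * k + 1) n with h | h
  · -- main case: exponents align, use Pascal
    have e1 : n + 2 - 2 * (k + 1) = n - 2 * k := by omega
    have e2 : n + 1 - 2 * (k + 1) = n - 2 * k - 1 := by omega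
    have e3 : n - 2 * k = (n - 2 * k - 1) + 1 := by omega
    have e4 : n + 2 - (k + 1) = n + 1 - k := by omega
    have e5 : n + 1 - (k + 1) = n - k := by omega
    rw [fW, fW, fW, e1, e2, e4, e5, choose_pascal]
    rw [e3]
    push_cast
    simp only [map_mul, map_add, map_neg, map_pow, map_one, map_natCast]
    ring
  · -- degenerate case: n ≤ 2k
    have e1 : n + 2 - 2 * (k + 1) = 0 := by omega
    have e2 : n - 2 * k = 0 := by omega
    have e4 : n + 2 - (k + 1) = n + 1 - k := by omega
    have e5 : n + 1 - (k + 1) = n - k := by omega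
    have z : (n - k).choose (k + 1) = 0 := Nat.choose_eq_zero_of_lt (by omega)
    have c4 : (n + 1 - k).choose (k + 1) = (n - k).choose k := by
      rcases Nat.lt_or_ge n (2 * k) with h' | h'
      · rw [Nat.choose_eq_zero_of_lt (by omega), Nat.choose_eq_zero_of_lt (by omega)]
      · have h1 : n + 1 - k = k + 1 := by omega
        have h2 : n - k = k := by omega
        rw [h1, h2, Nat.choose_self, Nat.choose_self]
    rw [fW, fW, fW, e1, e2, e4, e5, z, c4]
    push_cast
    simp only [map_mul, map_add, map_neg, map_pow, map_one, map_natCast, mul_zero, map_zero]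
    ring

lemma LW_ext (n : ℕ) : LW n = ∑ k ∈ Finset.range (n + 2), fW n k := by
  rw [Finset.sum_range_succ, fW_zero (by omega), add_zero, LW]

lemma LW_rec (n : ℕ) : LW (n + 2) = (X 0 + X 1) * LW (n + 1) - (X 0 * X 1) * LW n := by
  have h1 : LW (n + 2) = fW (n + 2) 0 + ∑ k ∈ Finset.range (n + 2), fW (n + 2) (k + 1) := by
    rw [LW, Finset.sum_range_succ']; ring
  rw [h1]
  have h2 : ∑ k ∈ Finset.range (n + 2), fW (n + 2) (k + 1)
      = (∑ k ∈ Finset.range (n + 2), (X 0 + X 1) * fW (n + 1) (k + 1))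
        - ∑ k ∈ Finset.range (n + 2), (X 0 * X 1) * fW n k := by
    rw [← Finset.sum_sub_distrib]
    exact Finset.sum_congr rfl fun k _ => fW_step n k
  rw [h2, ← Finset.mul_sum, ← Finset.mul_sum, LW_ext n]
  have h3 : LW (n + 1) = fW (n + 1) 0 + ∑ k ∈ Finset.range (n + 2), fW (n + 1) (k + 1) := by
    have : LW (n + 1) = ∑ k ∈ Finset.range (n + 3), fW (n + 1) k := by
      rw [LW_ext, Finset.sum_range_succ, fW_zero (by omega), add_zero]
    rw [this, Finset.sum_range_succ']; ring
  rw [h3]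
  have h0 : fW (n + 2) 0 = (X 0 + X 1) * fW (n + 1) 0 := by
    simp [fW, pow_succ]
    ring
  rw [h0]
  ring

lemma RW_rec (n : ℕ) : RW (n + 2) = (X 0 + X 1) * RW (n + 1) - (X 0 * X 1) * RW n := by
  have key : (X 0 + X 1) * RW (n + 1) = RW (n + 2) + (X 0 * X 1) * RW n := by
    simp only [RW, Finset.mul_sum]
    have expand : ∀ ℓ ∈ Finset.range (n + 2),
        (X 0 + X 1) * ((X 0 : MvPolynomial (Fin 2) ℚ) ^ ℓ * X 1 ^ (n + 1 - ℓ))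
        = X 0 ^ (ℓ + 1) * X 1 ^ (n + 1 - ℓ) + X 0 ^ ℓ * X 1 ^ (n + 2 - ℓ) := by
      intro ℓ hℓ
      have : n + 2 - ℓ = (n + 1 - ℓ) + 1 := by
        simp only [Finset.mem_range] at hℓ; omega
      rw [this, pow_succ, pow_succ]
      ring
    rw [Finset.sum_congr rfl expand, Finset.sum_add_distrib]
    have s1 : ∑ ℓ ∈ Finset.range (n + 2),
        (X 0 : MvPolynomial (Fin 2) ℚ) ^ (ℓ + 1) * X 1 ^ (n + 1 - ℓ)
        = X 0 ^ (n + 2) + ∑ ℓ ∈ Finset.range (n + 1),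
            X 0 * X 1 * (X 0 ^ ℓ * X 1 ^ (n - ℓ)) := by
      rw [Finset.sum_range_succ]
      have h1 : n + 1 - (n + 1) = 0 := by omega
      rw [h1, pow_zero, mul_one, add_comm]
      congr 1
      refine Finset.sum_congr rfl fun ℓ hℓ => ?_
      simp only [Finset.mem_range] at hℓ
      have : n + 1 - ℓ = (n - ℓ) + 1 := by omega
      rw [this, pow_succ, pow_succ]
      ring
    rw [s1]
    have s2 : ∑ ℓ ∈ Finset.range (n + 3),
        (X 0 : MvPolynomial (Fin 2) ℚ) ^ ℓ * X 1 ^ (n + 2 - ℓ)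
        = X 0 ^ (n + 2) + ∑ ℓ ∈ Finset.range (n + 2), X 0 ^ ℓ * X 1 ^ (n + 2 - ℓ) := by
      rw [Finset.sum_range_succ]
      have h2 : n + 2 - (n + 2) = 0 := by omega
      rw [h2, pow_zero, mul_one, add_comm]
    rw [s2]
    ring
  linear_combination -key

lemma LW_eq_RW : ∀ n, LW n = RW n := by
  intro n
  induction n using Nat.strong_induction_on with
  | _ n ih =>
    match n, ih with
    | 0, _ => simp [LW, RW, fW]
    | 1, _ =>
      simp only [LW, RW, fW, Finset.sum_range_succ, Finset.sum_range_zero]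
      norm_num
      ring
    | (m + 2), ih =>
      rw [LW_rec, RW_rec, ih (m + 1) (by omega), ih m (by omega)]

/-- For every `N ≥ 1`, the partial derivative `W′₂ = ∂W/∂t` of `W` satisfies
`W′₂(x+y, xy) = −(N+1)·π_{N−1,0}(x,y)`; that is,
`Σ_{i+2j=N+1} j·a_{i,j}(x+y)^{i}(xy)^{j−1} = −(N+1)·Σ_{ℓ=0}^{N−1} x^ℓ y^{N−1−ℓ}`. -/
theorem W2'_eval_add_mul (N : ℕ) (hN : 1 ≤ N) :
    ∑ j ∈ Finset.Iic ((N + 1) / 2),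
        C ((j : ℚ) * aW N j) * (X 0 + X 1) ^ (N + 1 - 2 * j) * (X 0 * X 1) ^ (j - 1)
      = -(C ((N : ℚ) + 1) *
          ∑ ℓ ∈ Finset.range N, (X 0 : MvPolynomial (Fin 2) ℚ) ^ ℓ * X 1 ^ (N - 1 - ℓ)) := by
  have hIic : Finset.Iic ((N + 1) / 2) = Finset.range ((N + 1) / 2 + 1) := by
    ext x; simp [Nat.lt_succ_iff]
  rw [hIic, Finset.sum_range_succ']
  have h0 : C (((0 : ℕ) : ℚ) * aW N 0) * (X 0 + X 1) ^ (N + 1 - 2 * 0) * (X 0 * X 1) ^ (0 - 1)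
      = (0 : MvPolynomial (Fin 2) ℚ) := by
    simp
  rw [h0, add_zero]
  have hterm : ∀ k ∈ Finset.range ((N + 1) / 2),
      C (((k + 1 : ℕ) : ℚ) * aW N (k + 1)) * (X 0 + X 1) ^ (N + 1 - 2 * (k + 1))
          * (X 0 * X 1) ^ (k + 1 - 1)
      = -(C ((N : ℚ) + 1) * fW (N - 1) k) := by
    intro k _
    have e1 : N + 1 - 2 * (k + 1) = N - 1 - 2 * k := by omega
    have e2 : k + 1 - 1 = k := by omega
    have e3 : N - (k + 1) = N - 1 - k := by omega
    have hk1 : ((k + 1 : ℕ) : ℚ) ≠ 0 := by positivity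
    have coeff : ((k + 1 : ℕ) : ℚ) * aW N (k + 1)
        = -(((N : ℚ) + 1) * ((-1 : ℚ) ^ k * (((N - 1 - k).choose k : ℕ) : ℚ))) := by
      rw [aW]
      simp only [Nat.succ_ne_zero, if_false, Nat.add_sub_cancel, e3]
      field_simp
      ring
    rw [e1, e2, coeff, fW, map_neg, map_mul, map_mul]
    ring
  rw [Finset.sum_congr rfl hterm]
  rw [Finset.sum_neg_distrib, ← Finset.mul_sum]
  have hext : ∑ k ∈ Finset.range ((N + 1) / 2), fW (N - 1) k
      = ∑ k ∈ Finset.range N, fW (N - 1) k := by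
    refine Finset.sum_subset (Finset.range_subset_range.2 (by omega)) fun k hk hk2 => ?_
    simp only [Finset.mem_range, not_lt] at hk hk2
    exact fW_zero2 (by omega)
  rw [hext]
  have hN' : N = (N - 1) + 1 := by omega
  have : ∑ k ∈ Finset.range N, fW (N - 1) k = LW (N - 1) := by
    rw [LW, ← hN']
  rw [this, LW_eq_RW, RW, ← hN']
end

section
/- Let N ≥ 4. Define γ̄, δ̄ ∈ ℚ[s,t] by γ̄(s,t) = Σ_{i+2j=N+1, j≥1} i·a_{i,j} s^{i−1} t^{j−1} and δ̄(s,t) = Σ_{i+2j=N+1, j≥2} j·a_{i,j} s^{i} t^{j−2}. Then in ℚ[x,y] the element (N+1)·(x+y)^{N−1}·δ̄(x+y, xy) + (N+1)·(x+y)^{N−2}·γ̄(x+y, xy) + (N+1)²·π_{N−2,N−2}(x,y) lies in the ideal of ℚ[x,y] generated by π_{N−1,0}(x,y) and π_{N,0}(x,y). (Equivalently, the determinant of the matrix [[ᾱ, β̄],[γ̄, δ̄]], with ᾱ = (N+1)s^{N−1} and β̄ = −(N+1)s^{N−2}, equals −(N+1)²·π_{N−2,N−2} in the ring ℚ[s,t]/⟨π_{N−1,0},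 π_{N,0}⟩ presenting the cohomology of the Grassmannian G_{2,N}.) -/
open MvPolynomial

/-- `γ̄(s,t) = Σ_{i+2j=N+1, j≥1} i·a_{i,j} s^{i−1} t^{j−1}`, evaluated at `s = x+y`, `t = xy`. -/
noncomputable def gammaBar (N : ℕ) : MvPolynomial (Fin 2) ℚ :=
  ∑ j ∈ Finset.Icc 1 ((N + 1) / 2),
    C (((N + 1 - 2 * j : ℕ) : ℚ) * aW N j)
      * (X 0 + X 1) ^ (N + 1 - 2 * j - 1) * (X 0 * X 1) ^ (j - 1)

/-- `δ̄(s,t) = Σ_{i+2j=N+1, j≥2} j·a_{i,j} s^{i} t^{j−2}`, evaluated at `s = x+y`, `t = xy`. -/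
noncomputable def deltaBar (N : ℕ) : MvPolynomial (Fin 2) ℚ :=
  ∑ j ∈ Finset.Icc 2 ((N + 1) / 2),
    C ((j : ℚ) * aW N j) * (X 0 + X 1) ^ (N + 1 - 2 * j) * (X 0 * X 1) ^ (j - 2)

/-!
Write `s = x + y`, `t = xy` and `h_n = π_{n,0}`, so that `(x - y) h_n = x^{n+1} - y^{n+1}` and
`h_{n+2} = s h_{n+1} - t h_n`. The recurrence gives the Dickson closed form
`h_n = Σ_j (-1)^j C(n-j, j) s^{n-2j} t^j`, which identifies `t γ̄ = (N+1)(h_N - s^N)` and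
`t δ̄ = (N+1)(s^{N-1} - h_{N-1})`; with `n = N - 2` the element becomes `-(N+1)²(s^n h_n - t^n)`.
Modulo `(h_{n+1}, h_{n+2})` every `t^k h_m` with `k + m > n` vanishes by Jacobi–Trudi, so
`s^k h_n ≡ t^k h_{n-k}` by induction on `k`; at `k = n` this is `s^n h_n ≡ t^n`.
-/

open Finset

section Dickson

variable {R : Type*} [CommRing R]

def dicksonTerm (s t : R) (n j : ℕ) : R :=
  (-1) ^ j * ((n - j).choose j : R) * s ^ (n - 2 * j) * t ^ j

lemma dicksonTerm_zero_right (s t : R) (n : ℕ) : dicksonTerm s t n 0 = s ^ n := by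
  simp [dicksonTerm]

lemma dicksonTerm_eq_zero (s t : R) {n j : ℕ} (h : n < 2 * j) : dicksonTerm s t n j = 0 := by
  simp [dicksonTerm, Nat.choose_eq_zero_of_lt (show n - j < j by omega)]

lemma dicksonTerm_add_two (s t : R) (n j : ℕ) :
    dicksonTerm s t (n + 2) (j + 1)
      = s * dicksonTerm s t (n + 1) (j + 1) - t * dicksonTerm s t n j := by
  have pascal : (n + 1 - j).choose (j + 1) = (n - j).choose j + (n - j).choose (j + 1) := by
    rcases le_or_gt j n with hjn | hnj
    · rw [show n + 1 - j = n - j + 1 by omega, Nat.choose_succ_succ']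
    · rw [show n + 1 - j = 0 by omega, show n - j = 0 by omega,
        Nat.choose_eq_zero_of_lt (by omega : 0 < j),
        Nat.choose_eq_zero_of_lt (by omega : 0 < j + 1)]
  -- Either the exponents of `s` match, or the binomial coefficient carrying them vanishes.
  have shift : ((n - j).choose (j + 1) : R) * s ^ (n - 2 * j)
      = ((n - j).choose (j + 1) : R) * (s * s ^ (n + 1 - 2 * (j + 1))) := by
    rcases le_or_gt (2 * (j + 1)) (n + 1) with h | h
    · rw [← pow_succ', show n + 1 - 2 * (j + 1) + 1 = n - 2 * j by omega]
    · simp [Nat.choose_eq_zero_of_lt (show n - j < j + 1 by omega)]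
  simp only [dicksonTerm, show n + 2 - (j + 1) = n + 1 - j by omega,
    show n + 2 - 2 * (j + 1) = n - 2 * j by omega, show n + 1 - (j + 1) = n - j by omega, pascal]
  push_cast
  linear_combination (-1) ^ (j + 1) * t ^ (j + 1) * shift

/-- The closed form of the Dickson polynomials of the second kind. -/
theorem eq_sum_dicksonTerm {s t : R} {u : ℕ → R} (h0 : u 0 = 1) (h1 : u 1 = s)
    (hrec : ∀ n, u (n + 2) = s * u (n + 1) - t * u n) {n M : ℕ} (hM : n < 2 * M) :
    u n = ∑ j ∈ range M, dicksonTerm s t n j := by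
  have base : ∀ n M, n < 2 → 0 < M → ∑ j ∈ range M, dicksonTerm s t n j = s ^ n :=
    fun n M hn hM => by
      rw [sum_eq_single_of_mem 0 (mem_range.2 hM) fun j _ hj => dicksonTerm_eq_zero s t (by omega),
        dicksonTerm_zero_right]
  induction n using Nat.twoStepInduction generalizing M with
  | zero => rw [base 0 M (by omega) (by omega), h0, pow_zero]
  | one => rw [base 1 M (by omega) (by omega), h1, pow_one]
  | more n ih₀ ih₁ =>
    obtain ⟨M, rfl⟩ : ∃ M', M = M' + 1 := ⟨M - 1, by omega⟩
    rw [hrec, ih₁ (M := M + 1) (by omega), ih₀ (M := M) (by omega), sum_range_succ',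
      sum_range_succ', mul_add, mul_sum, mul_sum]
    simp only [dicksonTerm_add_two, dicksonTerm_zero_right, sum_sub_distrib, pow_succ']
    abel

end Dickson

section Schur

lemma schur2_self (i : ℕ) : schur2 i i = (X 0 * X 1) ^ i := by
  simp [schur2, mul_pow]

lemma X_sub_X_mul_schur2 (k : ℕ) : (X 0 - X 1) * schur2 k 0 = X 0 ^ (k + 1) - X 1 ^ (k + 1) := by
  rw [← geom_sum₂_mul, mul_comm, schur2, ← Nat.Ico_zero_eq_range,
    ← Ico_add_one_right_eq_Icc]
  simp

lemma X_sub_X_ne_zero : (X 0 - X 1 : MvPolynomial (Fin 2) ℚ) ≠ 0 :=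
  sub_ne_zero.2 ((X_injective (σ := Fin 2) (R := ℚ)).ne (by decide))

lemma schur2_one_zero : schur2 1 0 = X 0 + X 1 := by
  refine mul_left_cancel₀ X_sub_X_ne_zero ?_
  rw [X_sub_X_mul_schur2]
  ring

lemma schur2_add_two (k : ℕ) :
    schur2 (k + 2) 0 = (X 0 + X 1) * schur2 (k + 1) 0 - X 0 * X 1 * schur2 k 0 := by
  refine mul_left_cancel₀ X_sub_X_ne_zero ?_
  linear_combination X_sub_X_mul_schur2 (k + 2) - (X 0 + X 1) * X_sub_X_mul_schur2 (k + 1)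
    + X 0 * X 1 * X_sub_X_mul_schur2 k

/-- Jacobi–Trudi: both sides are `π_{m+k+1,k+1}`. -/
lemma pow_mul_schur2_eq (k m : ℕ) :
    (X 0 * X 1) ^ (k + 1) * schur2 m 0
      = schur2 (m + k + 1) 0 * schur2 (k + 1) 0 - schur2 (m + k + 2) 0 * schur2 k 0 := by
  refine mul_left_cancel₀ (pow_ne_zero 2 X_sub_X_ne_zero) ?_
  linear_combination (X 0 * X 1) ^ (k + 1) * (X 0 - X 1) * X_sub_X_mul_schur2 m
    - (X 0 - X 1) * schur2 (k + 1) 0 * X_sub_X_mul_schur2 (m + k + 1)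
    - (X 0 ^ (m + k + 2) - X 1 ^ (m + k + 2)) * X_sub_X_mul_schur2 (k + 1)
    + (X 0 - X 1) * schur2 k 0 * X_sub_X_mul_schur2 (m + k + 2)
    + (X 0 ^ (m + k + 3) - X 1 ^ (m + k + 3)) * X_sub_X_mul_schur2 k

lemma schur2_eq_sum_dicksonTerm {n M : ℕ} (hM : n < 2 * M) :
    schur2 n 0 = ∑ j ∈ range M, dicksonTerm (X 0 + X 1) (X 0 * X 1) n j :=
  eq_sum_dicksonTerm (u := fun n => schur2 n 0) (by simpa using schur2_self 0) schur2_one_zero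
    schur2_add_two hM

end Schur

section Ideal

variable {n : ℕ} {I : Ideal (MvPolynomial (Fin 2) ℚ)}

lemma schur2_zero_mem (h₁ : schur2 (n + 1) 0 ∈ I) (h₂ : schur2 (n + 2) 0 ∈ I) {i : ℕ}
    (hi : n + 1 ≤ i) : schur2 i 0 ∈ I := by
  suffices ∀ k, schur2 (n + 1 + k) 0 ∈ I ∧ schur2 (n + 1 + k + 1) 0 ∈ I by
    simpa [show n + 1 + (i - (n + 1)) = i by omega] using (this (i - (n + 1))).1
  intro k
  induction k with
  | zero => exact ⟨h₁, h₂⟩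
  | succ k ih =>
    refine ⟨ih.2, ?_⟩
    show schur2 (n + 1 + k + 2) 0 ∈ I
    rw [schur2_add_two]
    exact sub_mem (I.mul_mem_left _ ih.2) (I.mul_mem_left _ ih.1)

lemma pow_mul_schur2_mem (h₁ : schur2 (n + 1) 0 ∈ I) (h₂ : schur2 (n + 2) 0 ∈ I) {k m : ℕ}
    (hkm : n + 1 ≤ m + k) : (X 0 * X 1) ^ k * schur2 m 0 ∈ I := by
  cases k with
  | zero => simpa using schur2_zero_mem h₁ h₂ hkm
  | succ k =>
    rw [pow_mul_schur2_eq]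
    exact sub_mem (I.mul_mem_right _ (schur2_zero_mem h₁ h₂ (by omega)))
      (I.mul_mem_right _ (schur2_zero_mem h₁ h₂ (by omega)))

lemma pow_mul_schur2_sub_mem (h₁ : schur2 (n + 1) 0 ∈ I) (h₂ : schur2 (n + 2) 0 ∈ I)
    {k : ℕ} (hk : k ≤ n) :
    (X 0 + X 1) ^ k * schur2 n 0 - (X 0 * X 1) ^ k * schur2 (n - k) 0 ∈ I := by
  induction k with
  | zero => simp
  | succ k ih =>
    obtain ⟨m, hm⟩ : ∃ m, n - k = m + 1 := ⟨n - k - 1, by omega⟩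
    have hrec := schur2_add_two m
    rw [show n - (k + 1) = m by omega]
    rw [hm] at ih
    have key : (X 0 + X 1) ^ (k + 1) * schur2 n 0 - (X 0 * X 1) ^ (k + 1) * schur2 m 0
        = (X 0 + X 1) * ((X 0 + X 1) ^ k * schur2 n 0 - (X 0 * X 1) ^ k * schur2 (m + 1) 0)
          + (X 0 * X 1) ^ k * schur2 (m + 2) 0 := by
      linear_combination (-(X 0 * X 1) ^ k) * hrec
    rw [key]
    exact add_mem (I.mul_mem_left _ (ih (by omega))) (pow_mul_schur2_mem h₁ h₂ (by omega))

lemma pow_mul_schur2_sub_pow_mem (h₁ : schur2 (n + 1) 0 ∈ I) (h₂ : schur2 (n + 2) 0 ∈ I) :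
    (X 0 + X 1) ^ n * schur2 n 0 - (X 0 * X 1) ^ n ∈ I := by
  simpa [schur2_self 0] using pow_mul_schur2_sub_mem h₁ h₂ le_rfl

end Ideal

lemma sub_two_mul_mul_aW (N k : ℕ) :
    ((N + 1 - 2 * (k + 1) : ℕ) : ℚ) * aW N (k + 1)
      = ((N : ℚ) + 1) * ((-1) ^ (k + 1) * ((N - (k + 1)).choose (k + 1) : ℕ)) := by
  have h := Nat.choose_succ_right_eq (N - (k + 1)) k
  rw [show N - (k + 1) - k = N + 1 - 2 * (k + 1) by omega] at h
  have h' : ((N - (k + 1)).choose (k + 1) : ℚ) * (k + 1)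
      = (N - (k + 1)).choose k * ((N + 1 - 2 * (k + 1) : ℕ) : ℚ) := by exact_mod_cast h
  simp only [aW, Nat.add_sub_cancel, Nat.succ_ne_zero, if_false, Nat.cast_succ]
  field_simp
  linear_combination -h'

lemma natCast_mul_aW (N : ℕ) {j : ℕ} (hj : j ≠ 0) :
    (j : ℚ) * aW N j = (-1) ^ j * ((N : ℚ) + 1) * ((N - j).choose (j - 1) : ℕ) := by
  have : (j : ℚ) ≠ 0 := Nat.cast_ne_zero.2 hj
  simp only [aW, hj, if_false]
  field_simp

lemma X_mul_gammaBar (N : ℕ) :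
    X 0 * X 1 * gammaBar N = C ((N : ℚ) + 1) * (schur2 N 0 - (X 0 + X 1) ^ N) := by
  rw [schur2_eq_sum_dicksonTerm (M := (N + 1) / 2 + 1) (by omega), sum_range_succ',
    dicksonTerm_zero_right, add_sub_cancel_right, gammaBar, ← Ico_add_one_right_eq_Icc,
    sum_Ico_eq_sum_range, Nat.add_sub_cancel, mul_sum, mul_sum]
  refine sum_congr rfl fun k _ => ?_
  rw [add_comm 1 k, sub_two_mul_mul_aW, dicksonTerm,
    show N + 1 - 2 * (k + 1) - 1 = N - 2 * (k + 1) by omega, Nat.add_sub_cancel]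
  simp only [map_mul, map_pow, map_neg, map_one, map_natCast]
  ring

lemma X_mul_deltaBar (N : ℕ) :
    X 0 * X 1 * deltaBar N = C ((N : ℚ) + 1) * ((X 0 + X 1) ^ (N - 1) - schur2 (N - 1) 0) := by
  rw [schur2_eq_sum_dicksonTerm (M := (N + 1) / 2 + 1 - 2 + 1) (by omega), sum_range_succ',
    dicksonTerm_zero_right, sub_add_cancel_right, deltaBar, ← Ico_add_one_right_eq_Icc,
    sum_Ico_eq_sum_range, ← sum_neg_distrib, mul_sum, mul_sum]
  refine sum_congr rfl fun k _ => ?_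
  rw [natCast_mul_aW N (by omega), dicksonTerm,
    show N + 1 - 2 * (2 + k) = N - 1 - 2 * (k + 1) by omega, show 2 + k - 2 = k by omega,
    show 2 + k - 1 = k + 1 by omega, show N - (2 + k) = N - 1 - (k + 1) by omega]
  simp only [map_mul, map_pow, map_neg, map_one, map_natCast]
  ring

lemma det_bar_eq_neg_mul (n : ℕ) :
    C (((n + 2 : ℕ) : ℚ) + 1) * (X 0 + X 1) ^ (n + 1) * deltaBar (n + 2)
      + C (((n + 2 : ℕ) : ℚ) + 1) * (X 0 + X 1) ^ n * gammaBar (n + 2)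
      + C ((((n + 2 : ℕ) : ℚ) + 1) ^ 2) * (X 0 * X 1) ^ n
      = -C ((((n + 2 : ℕ) : ℚ) + 1) ^ 2)
        * ((X 0 + X 1) ^ n * schur2 n 0 - (X 0 * X 1) ^ n) := by
  have hδ := X_mul_deltaBar (n + 2)
  rw [show n + 2 - 1 = n + 1 by omega] at hδ
  refine mul_left_cancel₀ (mul_ne_zero (X_ne_zero 0) (X_ne_zero 1)) ?_
  rw [map_pow]
  linear_combination C (((n + 2 : ℕ) : ℚ) + 1) * (X 0 + X 1) ^ (n + 1) * hδ
    + C (((n + 2 : ℕ) : ℚ) + 1) * (X 0 + X 1) ^ n * X_mul_gammaBar (n + 2)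
    + C (((n + 2 : ℕ) : ℚ) + 1) ^ 2 * (X 0 + X 1) ^ n * schur2_add_two n

/-- For `N ≥ 4`, the element
`(N+1)·(x+y)^{N−1}·δ̄(x+y,xy) + (N+1)·(x+y)^{N−2}·γ̄(x+y,xy) + (N+1)²·π_{N−2,N−2}(x,y)`
lies in the ideal of `ℚ[x,y]` generated by `π_{N−1,0}` and `π_{N,0}`; equivalently, the
determinant `ᾱδ̄ − β̄γ̄` (with `ᾱ = (N+1)s^{N−1}`, `β̄ = −(N+1)s^{N−2}`) equals
`−(N+1)²·π_{N−2,N−2}` in the cohomology ring of the Grassmannian `G_{2,N}`. -/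
theorem det_bar_eq_top_schur (N : ℕ) (hN : 4 ≤ N) :
    C ((N : ℚ) + 1) * (X 0 + X 1) ^ (N - 1) * deltaBar N
      + C ((N : ℚ) + 1) * (X 0 + X 1) ^ (N - 2) * gammaBar N
      + C (((N : ℚ) + 1) ^ 2) * schur2 (N - 2) (N - 2)
      ∈ Ideal.span {schur2 (N - 1) 0, schur2 N 0} := by
  obtain ⟨n, rfl⟩ : ∃ n, N = n + 2 := ⟨N - 2, by omega⟩
  simp only [Nat.add_sub_cancel, show n + 2 - 1 = n + 1 by omega]
  rw [schur2_self, det_bar_eq_neg_mul]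
  exact Ideal.mul_mem_left _ _ <|
    pow_mul_schur2_sub_pow_mem (Ideal.subset_span (by simp)) (Ideal.subset_span (by simp))
end

section
/- (Dot conversion, two-variable case) Let N ≥ 1 and let j ≥ k ≥ 0 be integers with j ≥ N−1. Then the two-variable Schur polynomial π_{j,k}(x,y) lies in the ideal of ℚ[x,y] generated by π_{N−1,0}(x,y) and π_{N,0}(x,y). -/
open MvPolynomial

lemma schur2_range (m : ℕ) :
    schur2 m 0 = ∑ ℓ ∈ Finset.range (m + 1), X 0 ^ ℓ * X 1 ^ (m - ℓ) := by
  rw [schur2, ← Nat.Ico_zero_eq_range, Finset.Ico_add_one_right_eq_Icc]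
  simp

lemma schur2_peel_bot (m : ℕ) :
    schur2 (m + 1) 0 = X 1 ^ (m + 1) + X 0 * schur2 m 0 := by
  rw [schur2_range, schur2_range, Finset.sum_range_succ', Finset.mul_sum]
  simp only [pow_zero, one_mul, Nat.sub_zero, Nat.succ_sub_succ]
  rw [add_comm]
  congr 1
  refine Finset.sum_congr rfl fun i _ => ?_
  ring

lemma schur2_peel_top (m : ℕ) :
    schur2 (m + 1) 0 = X 0 ^ (m + 1) + X 1 * schur2 m 0 := by
  rw [schur2_range, schur2_range, Finset.sum_range_succ, Finset.mul_sum]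
  have h : ∀ i ∈ Finset.range (m + 1),
      X (R := ℚ) (0 : Fin 2) ^ i * X 1 ^ (m + 1 - i) = X 1 * (X 0 ^ i * X 1 ^ (m - i)) := by
    intro i hi
    rw [Finset.mem_range] at hi
    have : m + 1 - i = (m - i) + 1 := by omega
    rw [this]; ring
  rw [Finset.sum_congr rfl h]
  simp [add_comm]

lemma schur2_rec (m : ℕ) :
    schur2 (m + 2) 0 = (X 0 + X 1) * schur2 (m + 1) 0 - X 0 * X 1 * schur2 m 0 := by
  have h1 : X 1 ^ (m + 1) = schur2 (m + 1) 0 - X 0 * schur2 m 0 := by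
    rw [schur2_peel_bot]; ring
  have h2 := schur2_peel_bot (m + 1)
  rw [h2, pow_succ, h1]
  ring

lemma schur2_mem (N : ℕ) (hN : 1 ≤ N) :
    ∀ m, schur2 (N - 1 + m) 0 ∈ Ideal.span {schur2 (N - 1) 0, schur2 N 0} := by
  set I := Ideal.span {schur2 (N - 1) 0, schur2 N 0} with hI
  have base0 : schur2 (N - 1) 0 ∈ I :=
    Ideal.subset_span (by simp)
  have base1 : schur2 (N - 1 + 1) 0 ∈ I := by
    have : N - 1 + 1 = N := by omega
    rw [this]
    exact Ideal.subset_span (by simp)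
  have key : ∀ m, schur2 (N - 1 + m) 0 ∈ I ∧ schur2 (N - 1 + m + 1) 0 ∈ I := by
    intro m
    induction m with
    | zero => exact ⟨base0, base1⟩
    | succ n ih =>
      refine ⟨ih.2, ?_⟩
      have : N - 1 + (n + 1) + 1 = (N - 1 + n) + 2 := by omega
      rw [this, schur2_rec]
      exact sub_mem (Ideal.mul_mem_left _ _ ih.2)
        (Ideal.mul_mem_left _ _ ih.1)
  exact fun m => (key m).1

lemma schur2_factor (j k : ℕ) (hjk : k ≤ j) :
    schur2 j k = (X 0 * X 1) ^ k * schur2 (j - k) 0 := by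
  rw [schur2, schur2, Finset.mul_sum]
  have hmap : (Finset.Icc 0 (j - k)).map (addRightEmbedding k) = Finset.Icc k j := by
    rw [Finset.map_add_right_Icc]
    congr 1 <;> omega
  rw [← hmap, Finset.sum_map]
  refine Finset.sum_congr rfl fun m hm => ?_
  rw [Finset.mem_Icc] at hm
  simp only [addRightEmbedding_apply]
  have h1 : j + k - (m + k) = j - m := by omega
  have h2 : j - k + 0 - m = j - k - m := by omega
  have h3 : j - m = k + (j - k - m) := by omega
  rw [h1, h2, h3, pow_add, pow_add, mul_pow]
  ring

/-- Dot conversion, two-variable case: for `N ≥ 1` and `j ≥ k ≥ 0` with `j ≥ N−1`, the Schur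
polynomial `π_{j,k}(x,y)` lies in the ideal of `ℚ[x,y]` generated by `π_{N−1,0}` and
`π_{N,0}`. -/
theorem dot_conversion_two (N j k : ℕ) (hN : 1 ≤ N) (hjk : k ≤ j) (hj : N - 1 ≤ j) :
    schur2 j k ∈ Ideal.span {schur2 (N - 1) 0, schur2 N 0} := by
  set I := Ideal.span {schur2 (N - 1) 0, schur2 N 0} with hI
  have key : ∀ k m : ℕ, N - 1 ≤ m + k → (X 0 * X 1) ^ k * schur2 m 0 ∈ I := by
    intro k
    induction k with
    | zero =>
      intro m hm
      have : m = N - 1 + (m - (N - 1)) := by omega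
      rw [pow_zero, one_mul, this]
      exact schur2_mem N hN _
    | succ n ih =>
      intro m hm
      have hxy : X 0 * X 1 * schur2 m 0 =
          (X 0 + X 1) * schur2 (m + 1) 0 - schur2 (m + 2) 0 := by
        rw [schur2_rec]; ring
      have : (X 0 * X 1) ^ (n + 1) * schur2 m 0 =
          (X 0 + X 1) * ((X 0 * X 1) ^ n * schur2 (m + 1) 0) -
            (X 0 * X 1) ^ n * schur2 (m + 2) 0 := by
        rw [pow_succ, mul_assoc, hxy]; ring
      rw [this]
      exact sub_mem (Ideal.mul_mem_left _ _ (ih (m + 1) (by omega)))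
        (ih (m + 2) (by omega))
  rw [schur2_factor j k hjk]
  exact key k (j - k) (by omega)
end
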